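/- arXiv:2002.06683 — 5 statements merged into one kernel-verified Lean document; each statement's English description precedes it below -/
import Mathlib

section
/- Let m ≥ 1 be a natural number and let a₁ ≤ a₂ ≤ … ≤ a_m and b₁ ≤ b₂ ≤ … ≤ b_m be non-decreasing real sequences with 1 ≤ a_i ≤ m, 1 ≤ b_i ≤ m, and a_i ≤ b_i for every i. Then ∑_{i=1}^{m−1} |a_i/b_i − a_{i+1}/b_{i+1}| ≤ 2·ln m. -/
/-! Write `r i = a i / b i ∈ (0, 1]`. On `(0, 1]` the logarithm expands distances, so
`|r i - r (i+1)| ≤ |log r i - log r (i+1)|`, and `log r = log a - log b` is a difference of two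
non-decreasing sequences. The total variation is therefore at most
`log (a m / a 1) + log (b m / b 1) ≤ 2 log m`. -/

open Finset Real

lemma sub_le_log_sub_log_of_le_one {x y : ℝ} (hx : 0 < x) (hxy : x ≤ y) (hy : y ≤ 1) :
    y - x ≤ log y - log x := by
  have hy0 : 0 < y := hx.trans_le hxy
  calc y - x ≤ (y - x) / y := le_div_self (sub_nonneg.2 hxy) hy0 hy
    _ = 1 - (y / x)⁻¹ := by field_simp
    _ ≤ log (y / x) := one_sub_inv_le_log_of_pos (div_pos hy0 hx)
    _ = log y - log x := log_div hy0.ne' hx.ne'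

lemma abs_sub_le_abs_log_sub_log {x y : ℝ} (hx : 0 < x) (hx1 : x ≤ 1) (hy : 0 < y)
    (hy1 : y ≤ 1) : |x - y| ≤ |log x - log y| := by
  rcases le_total x y with hxy | hyx
  · rw [abs_sub_comm, abs_sub_comm (log x)]
    exact (abs_of_nonneg (sub_nonneg.2 hxy)).trans_le
      ((sub_le_log_sub_log_of_le_one hx hxy hy1).trans (le_abs_self _))
  · exact (abs_of_nonneg (sub_nonneg.2 hyx)).trans_le
      ((sub_le_log_sub_log_of_le_one hy hyx hx1).trans (le_abs_self _))

lemma abs_div_sub_div_le_log_sub_log {a a' b b' : ℝ} (ha : 0 < a) (haa' : a ≤ a')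
    (hbb' : b ≤ b') (hab : a ≤ b) (hab' : a' ≤ b') :
    |a / b - a' / b'| ≤ (log a' - log a) + (log b' - log b) := by
  have ha' : 0 < a' := ha.trans_le haa'
  have hb : 0 < b := ha.trans_le hab
  have hb' : 0 < b' := ha'.trans_le hab'
  have hla : log a ≤ log a' := log_le_log ha haa'
  have hlb : log b ≤ log b' := log_le_log hb hbb'
  calc |a / b - a' / b'| ≤ |log (a / b) - log (a' / b')| :=
        abs_sub_le_abs_log_sub_log (div_pos ha hb) (div_le_one_of_le₀ hab hb.le)
          (div_pos ha' hb') (div_le_one_of_le₀ hab' hb'.le)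
    _ = |(log a - log b) - (log a' - log b')| := by
        rw [log_div ha.ne' hb.ne', log_div ha'.ne' hb'.ne']
    _ ≤ (log a' - log a) + (log b' - log b) := abs_le.2 ⟨by linarith, by linarith⟩

theorem sum_abs_div_sub_div_le_log {k m : ℕ} (hkm : k ≤ m) {a b : ℕ → ℝ}
    (ha_mono : ∀ i, k ≤ i → i < m → a i ≤ a (i + 1))
    (hb_mono : ∀ i, k ≤ i → i < m → b i ≤ b (i + 1))
    (ha_pos : ∀ i, k ≤ i → i ≤ m → 0 < a i)
    (hab : ∀ i, k ≤ i → i ≤ m → a i ≤ b i) :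
    ∑ i ∈ Ico k m, |a i / b i - a (i + 1) / b (i + 1)| ≤
      (log (a m) - log (a k)) + (log (b m) - log (b k)) := by
  calc ∑ i ∈ Ico k m, |a i / b i - a (i + 1) / b (i + 1)|
      ≤ ∑ i ∈ Ico k m, ((log (a (i + 1)) - log (a i)) + (log (b (i + 1)) - log (b i))) := by
        refine sum_le_sum fun i hi => ?_
        obtain ⟨hki, him⟩ := mem_Ico.1 hi
        exact abs_div_sub_div_le_log_sub_log (ha_pos i hki him.le) (ha_mono i hki him)
          (hb_mono i hki him) (hab i hki him.le) (hab (i + 1) (by omega) him)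
    _ = (log (a m) - log (a k)) + (log (b m) - log (b k)) := by
        rw [sum_add_distrib, sum_Ico_sub (fun i => log (a i)) hkm,
          sum_Ico_sub (fun i => log (b i)) hkm]

/-- For `m ≥ 1` and non-decreasing sequences `a i`, `b i` (indexed `1,…,m`)
with `1 ≤ a i ≤ m`, `1 ≤ b i ≤ m` and `a i ≤ b i`, the total variation of the ratios
is at most `2 ln m`. -/
theorem stmt_0 (m : ℕ) (hm : 1 ≤ m) (a b : ℕ → ℝ)
    (ha_mono : ∀ i, 1 ≤ i → i < m → a i ≤ a (i + 1))
    (hb_mono : ∀ i, 1 ≤ i → i < m → b i ≤ b (i + 1))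
    (ha_lb : ∀ i, 1 ≤ i → i ≤ m → 1 ≤ a i)
    (ha_ub : ∀ i, 1 ≤ i → i ≤ m → a i ≤ m)
    (hb_lb : ∀ i, 1 ≤ i → i ≤ m → 1 ≤ b i)
    (hb_ub : ∀ i, 1 ≤ i → i ≤ m → b i ≤ m)
    (hab : ∀ i, 1 ≤ i → i ≤ m → a i ≤ b i) :
    ∑ i ∈ Finset.Ico 1 m, |a i / b i - a (i + 1) / b (i + 1)| ≤ 2 * Real.log m := by
  have ha_pos i (h1 : 1 ≤ i) (hi : i ≤ m) : 0 < a i := one_pos.trans_le (ha_lb i h1 hi)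
  have hb_pos i (h1 : 1 ≤ i) (hi : i ≤ m) : 0 < b i := one_pos.trans_le (hb_lb i h1 hi)
  have hla : log (a m) - log (a 1) ≤ log m := by
    linarith [log_nonneg (ha_lb 1 le_rfl hm), log_le_log (ha_pos m hm le_rfl) (ha_ub m hm le_rfl)]
  have hlb : log (b m) - log (b 1) ≤ log m := by
    linarith [log_nonneg (hb_lb 1 le_rfl hm), log_le_log (hb_pos m hm le_rfl) (hb_ub m hm le_rfl)]
  linarith [sum_abs_div_sub_div_le_log hm ha_mono hb_mono ha_pos hab]
end

section
/- There exists a real constant C > 0 such that for every natural number m ≥ 1, every real c ≥ 0, and all non-decreasing real sequences a₁ ≤ … ≤ a_m and b₁ ≤ … ≤ b_m with 1 ≤ a_i ≤ m, 1 ≤ b_i ≤ m, and a_i ≤ b_i + c for every i, one has ∑_{i=1}^{m−1} |a_i/b_i − a_{i+1}/b_{i+1}| ≤ 2·ln m + C·(c + 1)². -/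
/-!
Along the sequences, the ratio `a/b` can only drop when `b` grows and only rise when `a` grows.
A drop caused by `b ↦ b'` is at most `(a/b)(b' - b)/b' ≤ (1 + c/b)(b' - b)/b'`, which is dominated
by the increment of `log b - c/b`; a rise caused by `a ↦ a'` is at most `(a' - a)/b'`, and since
`b' ≥ a' - c` this is dominated by the increment of `log a - c(c+1)/a`. Hence every step of the
total variation is bounded by the increment of the potential
`Φ(a, b) = log a - c(c+1)/a + log b - c/b`, the sum telescopes, and between values in `[1, m]`
the potential grows by at most `2 log m + c(c+1) + c ≤ 2 log m + (c+1)²`.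
-/

open Real Finset

lemma one_sub_div_le_log_sub_log {x x' : ℝ} (hx : 0 < x) (hx' : 0 < x') :
    1 - x / x' ≤ log x' - log x := by
  have h := one_sub_inv_le_log_of_pos (div_pos hx' hx)
  rwa [inv_div, log_div hx'.ne' hx.ne'] at h

lemma div_sub_div_le_log_sub_log_denom {c x y x' y' : ℝ} (hy : 0 < y) (hxx' : x ≤ x')
    (hyy' : y ≤ y') (hxc : x ≤ y + c) :
    x / y - x' / y' ≤ log y' - log y + c * (1 / y - 1 / y') := by
  have hy' : 0 < y' := hy.trans_le hyy'
  calc x / y - x' / y' ≤ x / y - x / y' := by gcongr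
    _ = x * (y' - y) / (y * y') := by field_simp
    _ ≤ (y + c) * (y' - y) / (y * y') := by gcongr
    _ = 1 - y / y' + c * (1 / y - 1 / y') := by field_simp
    _ ≤ log y' - log y + c * (1 / y - 1 / y') := by
      linarith [one_sub_div_le_log_sub_log hy hy']

lemma div_sub_div_le_log_sub_log_num {c x y x' y' : ℝ} (hc : 0 ≤ c) (hx : 0 < x) (hy : 0 < y)
    (hy' : 1 ≤ y') (hxx' : x ≤ x') (hyy' : y ≤ y') (hx'c : x' ≤ y' + c) :
    x' / y' - x / y ≤ log x' - log x + c * (c + 1) * (1 / x - 1 / x') := by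
  have hx' : 0 < x' := hx.trans_le hxx'
  have hy'0 : 0 < y' := by linarith
  have hgap : (x' - x) * (x' - y') ≤ (x' - x) * c := by gcongr; linarith
  have hxy' : x ≤ (c + 1) * y' := by nlinarith
  calc x' / y' - x / y ≤ x' / y' - x / y' := by gcongr
    _ = (x' - x) / x' + (x' - x) * (x' - y') / (x' * y') := by field_simp; ring
    _ ≤ (x' - x) / x' + (x' - x) * c / (x' * y') := by gcongr
    _ = (x' - x) / x' + c * (x' - x) / x' * (1 / y') := by field_simp
    _ ≤ (x' - x) / x' + c * (x' - x) / x' * ((c + 1) / x) := by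
      have hfac : 0 ≤ c * (x' - x) / x' := div_nonneg (mul_nonneg hc (by linarith)) hx'.le
      have hinv : 1 / y' ≤ (c + 1) / x := by rw [div_le_div_iff₀ hy'0 hx]; linarith
      gcongr
    _ = 1 - x / x' + c * (c + 1) * (1 / x - 1 / x') := by field_simp
    _ ≤ log x' - log x + c * (c + 1) * (1 / x - 1 / x') := by
      linarith [one_sub_div_le_log_sub_log hx hx']

noncomputable def ratioPotential (c x y : ℝ) : ℝ :=
  log x - c * (c + 1) / x + (log y - c / y)

lemma abs_div_sub_div_le_ratioPotential_sub {c x y x' y' : ℝ} (hc : 0 ≤ c)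
    (hx : 1 ≤ x) (hy : 1 ≤ y) (hxx' : x ≤ x') (hyy' : y ≤ y')
    (hxc : x ≤ y + c) (hx'c : x' ≤ y' + c) :
    |x / y - x' / y'| ≤ ratioPotential c x' y' - ratioPotential c x y := by
  have hx0 : 0 < x := by linarith
  have hy0 : 0 < y := by linarith
  have hlogx : log x ≤ log x' := log_le_log hx0 hxx'
  have hlogy : log y ≤ log y' := log_le_log hy0 hyy'
  have hinvx : 1 / x' ≤ 1 / x := one_div_le_one_div_of_le hx0 hxx'
  have hinvy : 1 / y' ≤ 1 / y := one_div_le_one_div_of_le hy0 hyy'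
  have hdrop := div_sub_div_le_log_sub_log_denom hy0 hxx' hyy' hxc
  have hrise := div_sub_div_le_log_sub_log_num hc hx0 hy0 (hy.trans hyy') hxx' hyy' hx'c
  have hcc : 0 ≤ c * (c + 1) := by positivity
  have eq : ratioPotential c x' y' - ratioPotential c x y =
      (log x' - log x + c * (c + 1) * (1 / x - 1 / x')) +
        (log y' - log y + c * (1 / y - 1 / y')) := by
    unfold ratioPotential; ring
  rw [eq, abs_le]
  constructor <;> linarith [mul_nonneg hcc (sub_nonneg.2 hinvx), mul_nonneg hc (sub_nonneg.2 hinvy)]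

lemma ratioPotential_sub_le {c x y x' y' M : ℝ} (hc : 0 ≤ c) (hx : 1 ≤ x) (hy : 1 ≤ y)
    (hx' : 1 ≤ x') (hy' : 1 ≤ y') (hx'M : x' ≤ M) (hy'M : y' ≤ M) :
    ratioPotential c x' y' - ratioPotential c x y ≤ 2 * log M + (c + 1) ^ 2 := by
  have hlogx' : log x' ≤ log M := log_le_log (by linarith) hx'M
  have hlogy' : log y' ≤ log M := log_le_log (by linarith) hy'M
  have hlogx : 0 ≤ log x := log_nonneg hx
  have hlogy : 0 ≤ log y := log_nonneg hy
  have hcc : 0 ≤ c * (c + 1) := by positivity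
  have hax : c * (c + 1) / x ≤ c * (c + 1) := div_le_self hcc hx
  have hay : c / y ≤ c := div_le_self hc hy
  have hax' : 0 ≤ c * (c + 1) / x' := by positivity
  have hay' : 0 ≤ c / y' := by positivity
  unfold ratioPotential
  linarith

/-- There is a constant `C > 0` such that for all `m ≥ 1`, `c ≥ 0` and
non-decreasing sequences `a i`, `b i` (indexed `1,…,m`) with `1 ≤ a i ≤ m`,
`1 ≤ b i ≤ m` and `a i ≤ b i + c`, the total variation of the ratios is at most
`2 ln m + C (c+1)²`. -/
theorem stmt_1 :
    ∃ C : ℝ, 0 < C ∧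
      ∀ (m : ℕ), 1 ≤ m → ∀ (c : ℝ), 0 ≤ c → ∀ (a b : ℕ → ℝ),
        (∀ i, 1 ≤ i → i < m → a i ≤ a (i + 1)) →
        (∀ i, 1 ≤ i → i < m → b i ≤ b (i + 1)) →
        (∀ i, 1 ≤ i → i ≤ m → 1 ≤ a i) →
        (∀ i, 1 ≤ i → i ≤ m → a i ≤ m) →
        (∀ i, 1 ≤ i → i ≤ m → 1 ≤ b i) →
        (∀ i, 1 ≤ i → i ≤ m → b i ≤ m) →
        (∀ i, 1 ≤ i → i ≤ m → a i ≤ b i + c) →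
        ∑ i ∈ Finset.Ico 1 m, |a i / b i - a (i + 1) / b (i + 1)| ≤
          2 * Real.log m + C * (c + 1) ^ 2 := by
  refine ⟨1, one_pos, fun m hm c hc a b ha hb ha1 haM hb1 hbM hab => ?_⟩
  let Φ : ℕ → ℝ := fun i => ratioPotential c (a i) (b i)
  have hstep : ∀ i ∈ Ico 1 m, |a i / b i - a (i + 1) / b (i + 1)| ≤ Φ (i + 1) - Φ i := by
    intro i hi
    obtain ⟨hi1, him⟩ := mem_Ico.1 hi
    exact abs_div_sub_div_le_ratioPotential_sub hc (ha1 i hi1 him.le) (hb1 i hi1 him.le)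
      (ha i hi1 him) (hb i hi1 him) (hab i hi1 him.le) (hab (i + 1) (by omega) him)
  calc ∑ i ∈ Ico 1 m, |a i / b i - a (i + 1) / b (i + 1)|
      ≤ ∑ i ∈ Ico 1 m, (Φ (i + 1) - Φ i) := sum_le_sum hstep
    _ = Φ m - Φ 1 := sum_Ico_sub Φ hm
    _ ≤ 2 * log m + 1 * (c + 1) ^ 2 := by
      rw [one_mul]
      exact ratioPotential_sub_le hc (ha1 1 le_rfl hm) (hb1 1 le_rfl hm) (ha1 m hm le_rfl)
        (hb1 m hm le_rfl) (haM m hm le_rfl) (hbM m hm le_rfl)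
end

section
/- Let m ≥ 1 be a real number and let α, β : ℝ → ℝ be functions that are monotone non-decreasing on the interval [0, m] and satisfy 1 ≤ α(t) ≤ β(t) ≤ m for all t ∈ [0, m]. Then the total variation of the function t ↦ α(t)/β(t) over the interval [0, m] is at most 2·ln m. -/
lemma key_ratio_ineq (a a' b b' : ℝ) (ha : 1 ≤ a) (haa : a ≤ a') (hab : a ≤ b)
    (hab' : a' ≤ b') (hbb : b ≤ b') :
    |a' / b' - a / b| ≤ (Real.log a' - Real.log a) + (Real.log b' - Real.log b) := by
  have ha0 : (0:ℝ) < a := lt_of_lt_of_le one_pos ha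
  have ha'0 : (0:ℝ) < a' := lt_of_lt_of_le ha0 haa
  have hb0 : (0:ℝ) < b := lt_of_lt_of_le ha0 hab
  have hb'0 : (0:ℝ) < b' := lt_of_lt_of_le hb0 hbb
  have hsplit : a' / b' - a / b = (a' - a) / b' - a * (b' - b) / (b * b') := by
    field_simp; ring
  have hX : (a' - a) / b' ≤ Real.log a' - Real.log a := by
    have hlog : Real.log (a / a') ≤ a / a' - 1 := Real.log_le_sub_one_of_pos (by positivity)
    rw [Real.log_div (ne_of_gt ha0) (ne_of_gt ha'0)] at hlog
    have h1 : (a' - a) / a' ≤ Real.log a' - Real.log a := by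
      have : (a' - a) / a' = 1 - a / a' := by field_simp
      linarith [this ▸ (by linarith : 1 - a / a' ≤ Real.log a' - Real.log a)]
    have h2 : (a' - a) / b' ≤ (a' - a) / a' :=
      div_le_div_of_nonneg_left (by linarith) ha'0 hab'
    linarith
  have hY : a * (b' - b) / (b * b') ≤ Real.log b' - Real.log b := by
    have hlog : Real.log (b / b') ≤ b / b' - 1 := Real.log_le_sub_one_of_pos (by positivity)
    rw [Real.log_div (ne_of_gt hb0) (ne_of_gt hb'0)] at hlog
    have h1 : (b' - b) / b' ≤ Real.log b' - Real.log b := by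
      have : (b' - b) / b' = 1 - b / b' := by field_simp
      linarith [this ▸ (by linarith : 1 - b / b' ≤ Real.log b' - Real.log b)]
    have h2 : a * (b' - b) / (b * b') ≤ (b' - b) / b' := by
      rw [div_le_div_iff₀ (by positivity) hb'0]
      have : a * (b' - b) ≤ b * (b' - b) :=
        mul_le_mul_of_nonneg_right hab (by linarith)
      nlinarith
    linarith
  have hXnn : 0 ≤ (a' - a) / b' := div_nonneg (by linarith) hb'0.le
  have hYnn : 0 ≤ a * (b' - b) / (b * b') := by
    apply div_nonneg _ (by positivity)
    exact mul_nonneg (le_of_lt ha0) (by linarith)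
  rw [hsplit, abs_sub_le_iff]
  constructor <;> linarith

/-- For `m ≥ 1` and functions `α ≤ β` non-decreasing on `[0, m]` with
values in `[1, m]`, the total variation of `t ↦ α t / β t` over `[0, m]` is at most
`2 ln m`. -/
theorem stmt_2 (m : ℝ) (hm : 1 ≤ m) (α β : ℝ → ℝ)
    (hα : MonotoneOn α (Set.Icc 0 m)) (hβ : MonotoneOn β (Set.Icc 0 m))
    (h1 : ∀ t ∈ Set.Icc (0 : ℝ) m, 1 ≤ α t)
    (h2 : ∀ t ∈ Set.Icc (0 : ℝ) m, α t ≤ β t)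
    (h3 : ∀ t ∈ Set.Icc (0 : ℝ) m, β t ≤ m) :
    eVariationOn (fun t => α t / β t) (Set.Icc 0 m) ≤ ENNReal.ofReal (2 * Real.log m) := by
  set g : ℝ → ℝ := fun t => Real.log (α t) + Real.log (β t) with hg
  have hgmono : ∀ x ∈ Set.Icc (0:ℝ) m, ∀ y ∈ Set.Icc (0:ℝ) m, x ≤ y → g x ≤ g y := by
    intro x hx y hy hxy
    have := Real.log_le_log (lt_of_lt_of_le one_pos (h1 x hx)) (hα hx hy hxy)
    have := Real.log_le_log (lt_of_lt_of_le one_pos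
      (le_trans (h1 x hx) (h2 x hx))) (hβ hx hy hxy)
    simp only [hg]; linarith
  have hgbound : ∀ x ∈ Set.Icc (0:ℝ) m, 0 ≤ g x ∧ g x ≤ 2 * Real.log m := by
    intro x hx
    have hαx := h1 x hx
    have hβx := le_trans hαx (h2 x hx)
    have hαm : α x ≤ m := le_trans (h2 x hx) (h3 x hx)
    have l1 : 0 ≤ Real.log (α x) := Real.log_nonneg hαx
    have l2 : 0 ≤ Real.log (β x) := Real.log_nonneg hβx
    have l3 : Real.log (α x) ≤ Real.log m := Real.log_le_log (by linarith) hαm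
    have l4 : Real.log (β x) ≤ Real.log m := Real.log_le_log (by linarith) (h3 x hx)
    constructor <;> (simp only [hg]; linarith)
  rw [eVariationOn]
  apply iSup_le
  rintro ⟨n, u, hu, hus⟩
  have hedist : ∀ i : ℕ,
      edist ((fun t => α t / β t) (u (i+1))) ((fun t => α t / β t) (u i))
        ≤ ENNReal.ofReal (g (u (i+1)) - g (u i)) := by
    intro i
    have hxi := hus i
    have hxi1 := hus (i+1)
    have hle : u i ≤ u (i+1) := hu (Nat.le_succ i)
    have hk := key_ratio_ineq (α (u i)) (α (u (i+1))) (β (u i)) (β (u (i+1)))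
      (h1 _ hxi) (hα hxi hxi1 hle) (h2 _ hxi) (h2 _ hxi1) (hβ hxi hxi1 hle)
    rw [edist_dist, Real.dist_eq]
    apply ENNReal.ofReal_le_ofReal
    simp only [hg]
    linarith [hk]
  calc ∑ i ∈ Finset.range n, edist ((fun t => α t / β t) (u (i+1))) ((fun t => α t / β t) (u i))
      ≤ ∑ i ∈ Finset.range n, ENNReal.ofReal (g (u (i+1)) - g (u i)) :=
        Finset.sum_le_sum fun i _ => hedist i
    _ = ENNReal.ofReal (∑ i ∈ Finset.range n, (g (u (i+1)) - g (u i))) := by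
        rw [ENNReal.ofReal_sum_of_nonneg]
        intro i _
        have := hgmono (u i) (hus i) (u (i+1)) (hus (i+1)) (hu (Nat.le_succ i))
        linarith
    _ = ENNReal.ofReal (g (u n) - g (u 0)) := by rw [Finset.sum_range_sub (fun i => g (u i))]
    _ ≤ ENNReal.ofReal (2 * Real.log m) := by
        apply ENNReal.ofReal_le_ofReal
        have h1' := hgbound (u n) (hus n)
        have h2' := hgbound (u 0) (hus 0)
        linarith [h1'.2, h2'.1]
end

section
/- Let n, n'', e be natural numbers, let N = 2^{n''} and E = 2^{e} with E ≤ N/2, let U' and V' be finite sets of n-bit strings each of cardinality N, let U₁, …, U_E be pairwise disjoint subsets of U' each of cardinality N/(2E), and let Z be a function assigning a natural number Z(u,v) to each pair of n-bit strings, such that for every n-bit string u the number of strings v ∈ V' with Z(u,v) < e is less than E. Then there exist subsets V₁, …, V_E of V', each of cardinality N/(2E), such that Z(u,v) ≥ e for all j ≤ E and all (u,v) ∈ U_j × V_j. -/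
/-! For a fixed `U_j`, each `u ∈ U_j` rules out fewer than `E` strings of `V'`, so at most
`|U_j| (E - 1)` strings of `V'` are ruled out altogether. Since `|U_j| E = (N / (2E)) E ≤ N`,
at least `N / (2E)` strings of `V'` remain, and any `N / (2E)` of them form `V_j`. -/

open Finset

namespace Finset

variable {α β : Type*} [DecidableEq β]

theorem card_le_card_filter_forall_add_mul (s : Finset α) (t : Finset β) (p : α → β → Prop)
    [∀ u v, Decidable (p u v)] (m : ℕ) (hm : ∀ u ∈ s, #{v ∈ t | ¬ p u v} ≤ m) :
    #t ≤ #{v ∈ t | ∀ u ∈ s, p u v} + #s * m := by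
  have hbad : {v ∈ t | ¬ ∀ u ∈ s, p u v} ⊆ s.biUnion fun u => {v ∈ t | ¬ p u v} := by
    intro v hv
    simp only [mem_filter, not_forall, exists_prop] at hv
    obtain ⟨hvt, u, hus, hpuv⟩ := hv
    exact mem_biUnion.mpr ⟨u, hus, mem_filter.mpr ⟨hvt, hpuv⟩⟩
  calc #t = #{v ∈ t | ∀ u ∈ s, p u v} + #{v ∈ t | ¬ ∀ u ∈ s, p u v} :=
        (card_filter_add_card_filter_not _).symm
    _ ≤ #{v ∈ t | ∀ u ∈ s, p u v} + #s * m := by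
        gcongr
        exact (card_le_card hbad).trans (card_biUnion_le_card_mul _ _ _ hm)

theorem exists_subset_card_eq_forall_of_card_filter_not_le (s : Finset α) (t : Finset β)
    (p : α → β → Prop) [∀ u v, Decidable (p u v)] (m k : ℕ)
    (hm : ∀ u ∈ s, #{v ∈ t | ¬ p u v} ≤ m) (hk : k + #s * m ≤ #t) :
    ∃ W ⊆ t, #W = k ∧ ∀ u ∈ s, ∀ v ∈ W, p u v := by
  have hgood := card_le_card_filter_forall_add_mul s t p m hm
  obtain ⟨W, hWsub, hWcard⟩ :=
    exists_subset_card_eq (show k ≤ #{v ∈ t | ∀ u ∈ s, p u v} by omega)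
  exact ⟨W, hWsub.trans (filter_subset _ _), hWcard,
    fun u hu v hv => (mem_filter.mp (hWsub hv)).2 u hu⟩

end Finset

theorem Nat.div_add_div_mul_pred_le (N E : ℕ) (hE : 0 < E) :
    N / (2 * E) + N / (2 * E) * (E - 1) ≤ N :=
  calc N / (2 * E) + N / (2 * E) * (E - 1) = N / (2 * E) * E := by
        rw [Nat.mul_sub_one, Nat.add_sub_cancel' (Nat.le_mul_of_pos_right _ hE)]
    _ ≤ N / (2 * E) * (2 * E) := Nat.mul_le_mul_left _ (by omega)
    _ ≤ N := Nat.div_mul_le_self N _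

theorem stmt_5_general (n e : ℕ) (N E : ℕ)
    (V' : Finset (Fin n → Bool)) (hV' : V'.card = N)
    (U : Fin E → Finset (Fin n → Bool))
    (hUcard : ∀ j, (U j).card = N / (2 * E))
    (Z : (Fin n → Bool) → (Fin n → Bool) → ℕ)
    (hZ : ∀ u : Fin n → Bool, (V'.filter (fun v => Z u v < e)).card < E) :
    ∃ V : Fin E → Finset (Fin n → Bool),
      (∀ j, V j ⊆ V') ∧ (∀ j, (V j).card = N / (2 * E)) ∧
      ∀ j : Fin E, ∀ u ∈ U j, ∀ v ∈ V j, e ≤ Z u v := by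
  have hgood : ∀ j : Fin E, ∃ W ⊆ V', #W = N / (2 * E) ∧ ∀ u ∈ U j, ∀ v ∈ W, e ≤ Z u v := by
    intro j
    refine exists_subset_card_eq_forall_of_card_filter_not_le _ _ _ (E - 1) _
      (fun u _ => ?_) ?_
    · simpa only [not_le] using Nat.le_sub_one_of_lt (hZ u)
    · rw [hUcard, hV']
      exact Nat.div_add_div_mul_pred_le N E j.pos
  choose V hVsub hVcard hVgood using hgood
  exact ⟨V, hVsub, hVcard, hVgood⟩

/-- the paper's Lemma 7: with `N = 2^{n''}`, `E = 2^e`, `E ≤ N/2`,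
sets `U'`, `V'` of `n`-bit strings of size `N`, pairwise disjoint subsets
`U₁, …, U_E ⊆ U'` of size `N/(2E)`, and `Z` such that for every `u` fewer than `E`
strings `v ∈ V'` satisfy `Z u v < e`, there are subsets `V₁, …, V_E ⊆ V'` of size
`N/(2E)` with `Z u v ≥ e` for all `j` and `(u, v) ∈ U_j × V_j`. -/
theorem stmt_5 (n n'' e : ℕ) (N E : ℕ) (hN : N = 2 ^ n'') (hE : E = 2 ^ e)
    (hEN : E ≤ N / 2)
    (U' V' : Finset (Fin n → Bool)) (hU' : U'.card = N) (hV' : V'.card = N)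
    (U : Fin E → Finset (Fin n → Bool))
    (hUsub : ∀ j, U j ⊆ U')
    (hUdisj : ∀ j j' : Fin E, j ≠ j' → Disjoint (U j) (U j'))
    (hUcard : ∀ j, (U j).card = N / (2 * E))
    (Z : (Fin n → Bool) → (Fin n → Bool) → ℕ)
    (hZ : ∀ u : Fin n → Bool, (V'.filter (fun v => Z u v < e)).card < E) :
    ∃ V : Fin E → Finset (Fin n → Bool),
      (∀ j, V j ⊆ V') ∧ (∀ j, (V j).card = N / (2 * E)) ∧
      ∀ j : Fin E, ∀ u ∈ U j, ∀ v ∈ V j, e ≤ Z u v :=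
  stmt_5_general n e N E V' hV' U hUcard Z hZ
end

section
/- Let N and E be powers of two with 1 ≤ E ≤ N/2, let U' and V' be finite sets each of cardinality N, let U₁, …, U_E be a partition of U' into E sets each of cardinality N/E, and let a : U' × V' → ℝ be any function. Then there exist subsets V₁, …, V_E of V', each of cardinality N/E, such that, writing S = ⋃_{j ≤ E} (U_j × V_j), the average of a over S is at least the average of a over U' × V'; that is, (1/|S|)·∑_{(u,v) ∈ S} a(u,v) ≥ (1/(N·N))·∑_{(u,v) ∈ U' × V'} a(u,v). -/
/-!
Split `V'` into `E` blocks `W₁, …, W_E` of size `N / E`. For each `j`, the sum of `a` over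
`U_j × V'` is the sum of its sums over the `E` rectangles `U_j × W_i`, so the largest of them
is at least a `1 / E` fraction of the whole; take `V_j` to be that block. Then the sum over `S`
is at least `1 / E` of the total, while `|S| = N² / E`.
-/

open Finset Function

namespace Finset

variable {α β ι κ M : Type*}

theorem exists_equipartition [DecidableEq α] (s : Finset α) {n k : ℕ} (h : #s = n * k) :
    ∃ W : Fin n → Finset α, (∀ i, W i ⊆ s) ∧ (∀ i, #(W i) = k) ∧
      Pairwise (Disjoint on W) ∧ univ.biUnion W = s := by
  let e : Fin n × Fin k ≃ s := finProdFinEquiv.trans ((finCongr h.symm).trans s.equivFin.symm)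
  let g : Fin n × Fin k ↪ α := e.toEmbedding.trans (Embedding.subtype _)
  refine ⟨fun i => univ.map ((Embedding.sectR i (Fin k)).trans g), ?_, ?_, ?_, ?_⟩
  · intro i
    simp [g, subset_iff]
  · simp
  · intro i j hij
    simp only [onFun, disjoint_left, mem_map, mem_univ, true_and]
    rintro _ ⟨b, rfl⟩ ⟨b', hb'⟩
    exact hij (congrArg Prod.fst (g.injective hb')).symm
  · ext x
    simp only [mem_biUnion, mem_univ, mem_map, true_and]
    refine ⟨?_, fun hx => ⟨(e.symm ⟨x, hx⟩).1, (e.symm ⟨x, hx⟩).2, by simp [g]⟩⟩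
    rintro ⟨i, b, rfl⟩
    exact (e (i, b)).2

theorem pairwise_disjoint_product_left {U : ι → Finset α} (hU : Pairwise (Disjoint on U))
    (V : ι → Finset β) : Pairwise (Disjoint on fun j => U j ×ˢ V j) :=
  fun _ _ hij => disjoint_product.2 (Or.inl (hU hij))

section OrderedSum

variable [AddCommMonoid M] [LinearOrder M] [IsOrderedAddMonoid M] [Fintype ι] [Fintype κ]

theorem exists_sum_biUnion_le_card_nsmul [DecidableEq α] [Nonempty ι] {W : ι → Finset α}
    (hW : Pairwise (Disjoint on W)) (g : α → M) :
    ∃ i, ∑ x ∈ univ.biUnion W, g x ≤ Fintype.card ι • ∑ x ∈ W i, g x := by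
  obtain ⟨i, -, hi⟩ := exists_max_image univ (fun i => ∑ x ∈ W i, g x) univ_nonempty
  refine ⟨i, ?_⟩
  rw [sum_biUnion (hW.set_pairwise _)]
  exact sum_le_card_nsmul _ _ _ fun j _ => hi j (mem_univ j)

theorem exists_sum_le_card_nsmul_sum_blocks [DecidableEq α] [DecidableEq β] [Nonempty κ]
    {U : ι → Finset α} {W : κ → Finset β} (hU : Pairwise (Disjoint on U))
    (hW : Pairwise (Disjoint on W)) (a : α → β → M) :
    ∃ c : ι → κ, ∑ u ∈ univ.biUnion U, ∑ v ∈ univ.biUnion W, a u v ≤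
      Fintype.card κ • ∑ p ∈ univ.biUnion (fun j => U j ×ˢ W (c j)), a p.1 p.2 := by
  choose c hc using fun j => exists_sum_biUnion_le_card_nsmul hW (fun v => ∑ u ∈ U j, a u v)
  refine ⟨c, ?_⟩
  rw [sum_biUnion (hU.set_pairwise _),
    sum_biUnion ((pairwise_disjoint_product_left hU _).set_pairwise _), smul_sum]
  refine sum_le_sum fun j _ => ?_
  rw [sum_product, sum_comm, sum_comm (s := U j)]
  exact hc j

end OrderedSum

end Finset

theorem one_div_mul_self_mul_le_of_le_mul {e k T s : ℝ} (he : 0 ≤ e) (hk : 0 ≤ k)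
    (h : T ≤ e * s) : 1 / (e * k * (e * k)) * T ≤ 1 / (e * (k * k)) * s := by
  rcases he.eq_or_lt with rfl | he
  · simp
  rcases hk.eq_or_lt with rfl | hk
  · simp
  rw [div_mul_eq_mul_div, div_mul_eq_mul_div, div_le_div_iff₀ (by positivity) (by positivity)]
  nlinarith [mul_pos he hk]

theorem stmt_6_general {α : Type*} [DecidableEq α] (N E : ℕ)
    (U' V' : Finset α) (hU' : U'.card = N) (hV' : V'.card = N)
    (U : Fin E → Finset α)
    (hUdisj : ∀ j j' : Fin E, j ≠ j' → Disjoint (U j) (U j'))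
    (hUunion : Finset.univ.biUnion U = U')
    (hUcard : ∀ j, (U j).card = N / E)
    (a : α → α → ℝ) :
    ∃ V : Fin E → Finset α,
      (∀ j, V j ⊆ V') ∧ (∀ j, (V j).card = N / E) ∧
      (1 / ((Finset.univ.biUnion (fun j : Fin E => U j ×ˢ V j)).card : ℝ)) *
          ∑ p ∈ Finset.univ.biUnion (fun j : Fin E => U j ×ˢ V j), a p.1 p.2 ≥
        (1 / ((N : ℝ) * N)) * ∑ u ∈ U', ∑ v ∈ V', a u v := by
  rcases E.eq_zero_or_pos with rfl | hE
  · exact ⟨fun j => j.elim0, fun j => j.elim0, fun j => j.elim0, by simp [← hUunion]⟩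
  have : NeZero E := ⟨hE.ne'⟩
  set k := N / E
  have hN : N = E * k := by
    rw [← hU', ← hUunion, card_biUnion (Pairwise.set_pairwise hUdisj _)]
    simp [hUcard]
  obtain ⟨W, hWsub, hWcard, hWdisj, hWunion⟩ := V'.exists_equipartition (hV'.trans hN)
  obtain ⟨c, hc⟩ := exists_sum_le_card_nsmul_sum_blocks hUdisj hWdisj a
  refine ⟨fun j => W (c j), fun j => hWsub _, fun j => hWcard _, ?_⟩
  have hScard : #(univ.biUnion fun j => U j ×ˢ W (c j)) = E * (k * k) := by
    rw [card_biUnion ((pairwise_disjoint_product_left hUdisj _).set_pairwise _)]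
    simp [hUcard, hWcard]
  rw [hUunion, hWunion, Fintype.card_fin, nsmul_eq_mul] at hc
  rw [ge_iff_le, hScard, hN]
  push_cast
  exact one_div_mul_self_mul_le_of_le_mul (Nat.cast_nonneg _) (Nat.cast_nonneg _) hc

/-- the paper's Lemma 9: for powers of two `1 ≤ E ≤ N/2`, finite sets
`U'`, `V'` of size `N`, a partition `U₁, …, U_E` of `U'` into sets of size `N/E`, and
any `a : U' × V' → ℝ`, there exist subsets `V₁, …, V_E ⊆ V'` of size `N/E` such that,
with `S = ⋃_j U_j × V_j`, the average of `a` over `S` is at least its average over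
`U' × V'`. -/
theorem stmt_6 {α : Type*} [DecidableEq α] (N E : ℕ)
    (hNpow : ∃ p : ℕ, N = 2 ^ p) (hEpow : ∃ q : ℕ, E = 2 ^ q)
    (hE1 : 1 ≤ E) (hEN : E ≤ N / 2)
    (U' V' : Finset α) (hU' : U'.card = N) (hV' : V'.card = N)
    (U : Fin E → Finset α)
    (hUdisj : ∀ j j' : Fin E, j ≠ j' → Disjoint (U j) (U j'))
    (hUunion : Finset.univ.biUnion U = U')
    (hUcard : ∀ j, (U j).card = N / E)
    (a : α → α → ℝ) :
    ∃ V : Fin E → Finset α,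
      (∀ j, V j ⊆ V') ∧ (∀ j, (V j).card = N / E) ∧
      (1 / ((Finset.univ.biUnion (fun j : Fin E => U j ×ˢ V j)).card : ℝ)) *
          ∑ p ∈ Finset.univ.biUnion (fun j : Fin E => U j ×ˢ V j), a p.1 p.2 ≥
        (1 / ((N : ℝ) * N)) * ∑ u ∈ U', ∑ v ∈ V', a u v :=
  stmt_6_general N E U' V' hU' hV' U hUdisj hUunion hUcard a
end
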